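/- arXiv:1204.5549 — 4 statements merged into one kernel-verified Lean document; each statement's English description precedes it below -/
import Mathlib

section
/- Let α : [0,T'] → ℝ be continuous with 0 ≤ α(t) ≤ εt for all t ∈ (0,T'], where 0 < ε < 1, and let b : [0,T'] → ℝ be continuous with sup_t |b(t)| · ε^{N} ≤ q < 1 for some N ∈ ℕ. Then the composition operator (Mv)(t) = b(t)·(α(t)/t)^{N}·v(α(t)) (with (α(t)/t)^N interpreted as its limit at t=0) is a bounded linear operator on C[0,T'] with the weighted norm ‖v‖_l = sup_t e^{−lt}|v(t)|, and ‖M‖ ≤ q < 1 for every l ≥ 0. -/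
/-! Since `α t ≤ ε t`, the coefficient `b t (α t / t) ^ N` is at most `|b t| ε ^ N ≤ q`
in absolute value. Since moreover `α t ≤ t` and the weight `exp (-l t)` is antitone for
`l ≥ 0`, `exp (-l t) |v (α t)| ≤ exp (-l α(t)) |v (α t)| ≤ M`. -/

open Real Set

lemma exp_neg_mul_le_exp_neg_mul {l s t : ℝ} (hl : 0 ≤ l) (hst : s ≤ t) :
    exp (-l * t) ≤ exp (-l * s) :=
  exp_le_exp.mpr (mul_le_mul_of_nonpos_left hst (neg_nonpos.mpr hl))

lemma exp_neg_mul_mul_abs_comp_le {T l s t M : ℝ} {v : ℝ → ℝ} (hl : 0 ≤ l)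
    (hs : 0 ≤ s) (hst : s ≤ t) (htT : t ≤ T)
    (hM : ∀ τ ∈ Icc 0 T, exp (-l * τ) * |v τ| ≤ M) :
    exp (-l * t) * |v s| ≤ M :=
  (mul_le_mul_of_nonneg_right (exp_neg_mul_le_exp_neg_mul hl hst) (abs_nonneg _)).trans
    (hM s ⟨hs, hst.trans htT⟩)

lemma div_pow_le_pow_of_le_mul {a t ε : ℝ} (N : ℕ) (ht : 0 < t) (ha : 0 ≤ a)
    (haε : a ≤ ε * t) : (a / t) ^ N ≤ ε ^ N :=
  pow_le_pow_left₀ (div_nonneg ha ht.le) ((div_le_iff₀ ht).mpr haε) N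

theorem composition_operator_bielecki_bound_general
    (T' ε q : ℝ) (hε1 : ε < 1)
    (N : ℕ) (α b : ℝ → ℝ)
    (hα : ∀ t ∈ Set.Ioc 0 T', 0 ≤ α t ∧ α t ≤ ε * t)
    (hb : ∀ t ∈ Set.Icc 0 T', |b t| * ε ^ N ≤ q)
    (l : ℝ) (hl : 0 ≤ l)
    (v : ℝ → ℝ)
    (M : ℝ) (hM : ∀ t ∈ Set.Icc 0 T', Real.exp (-l * t) * |v t| ≤ M) :
    ∀ t ∈ Set.Ioc 0 T',
      Real.exp (-l * t) * |b t * (α t / t) ^ N * v (α t)| ≤ q * M := by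
  rintro t ⟨ht0, htT⟩
  obtain ⟨hα0, hαε⟩ := hα t ⟨ht0, htT⟩
  have hαt : α t ≤ t := hαε.trans (mul_le_of_le_one_left ht0.le hε1.le)
  have hweight : exp (-l * t) * |v (α t)| ≤ M :=
    exp_neg_mul_mul_abs_comp_le hl hα0 hαt htT hM
  have hcoef : |b t| * (α t / t) ^ N ≤ q :=
    (mul_le_mul_of_nonneg_left (div_pow_le_pow_of_le_mul N ht0 hα0 hαε) (abs_nonneg _)).trans
      (hb t ⟨ht0.le, htT⟩)
  have hratio : 0 ≤ α t / t := div_nonneg hα0 ht0.le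
  have hq0 : 0 ≤ q := (by positivity : 0 ≤ |b t| * (α t / t) ^ N).trans hcoef
  calc exp (-l * t) * |b t * (α t / t) ^ N * v (α t)|
      = (|b t| * (α t / t) ^ N) * (exp (-l * t) * |v (α t)|) := by
        rw [abs_mul, abs_mul, abs_pow, abs_of_nonneg hratio]; ring
    _ ≤ q * M := mul_le_mul hcoef hweight (by positivity) hq0

/-- The composition operator (Mv)(t) = b(t)(α(t)/t)^N v(α(t)) with 0 ≤ α(t) ≤ εt,
0 < ε < 1, and sup|b|·ε^N ≤ q < 1 satisfies, in the Bielecki norm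
‖v‖_l = sup e^{−lt}|v(t)| for every l ≥ 0, the bound ‖Mv‖_l ≤ q‖v‖_l. -/
theorem composition_operator_bielecki_bound
    (T' ε q : ℝ) (hT' : 0 < T') (hε0 : 0 < ε) (hε1 : ε < 1) (hq : q < 1)
    (N : ℕ) (α b : ℝ → ℝ)
    (hαc : ContinuousOn α (Set.Icc 0 T')) (hbc : ContinuousOn b (Set.Icc 0 T'))
    (hα : ∀ t ∈ Set.Ioc 0 T', 0 ≤ α t ∧ α t ≤ ε * t)
    (hb : ∀ t ∈ Set.Icc 0 T', |b t| * ε ^ N ≤ q)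
    (l : ℝ) (hl : 0 ≤ l)
    (v : ℝ → ℝ) (hv : ContinuousOn v (Set.Icc 0 T'))
    (M : ℝ) (hM : ∀ t ∈ Set.Icc 0 T', Real.exp (-l * t) * |v t| ≤ M) :
    ∀ t ∈ Set.Ioc 0 T',
      Real.exp (-l * t) * |b t * (α t / t) ^ N * v (α t)| ≤ q * M :=
  composition_operator_bielecki_bound_general T' ε q hε1 N α b hα hb l hl v M hM
end

section
/- For every constant c ∈ ℝ, the function x(t) = δ(t) + c − (ln t)/(ln 2) satisfies the Volterra equation ∫₀^{t/2} x(s) ds − ∫_{t/2}^{t} x(s) ds = 1 + t for all t > 0; equivalently, the regular part g(t) = c − (ln t)/(ln 2) satisfies ∫₀^{t/2} g(s) ds − ∫_{t/2}^{t} g(s) ds = t for all t > 0, and the delta contributes ∫₀^{t/2} δ = 1, ∫_{t/2}^t δ = 0. -/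
/-! With `F x = x log x - x` an antiderivative of `log` (integrable through `0`), the two log
integrals differ by `2 F (t/2) - F t = -t log 2`, which the factor `-1 / log 2` turns into `t`;
the constant `c` cancels because both intervals have length `t / 2`. -/

open MeasureTheory intervalIntegral

open Real in
theorem integral_log_zero_half_sub_integral_log_half (t : ℝ) :
    (∫ s in (0 : ℝ)..t / 2, log s) - ∫ s in t / 2..t, log s = -(t * log 2) := by
  rcases eq_or_ne t 0 with rfl | ht
  · simp
  rw [integral_log, integral_log, log_div ht two_ne_zero]
  ring

open Real in
theorem integral_const_sub_log_div (c d a b : ℝ) :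
    ∫ s in a..b, (c - log s / d) = (b - a) * c - (∫ s in a..b, log s) / d := by
  rw [integral_sub intervalIntegrable_const (intervalIntegrable_log'.div_const d),
    intervalIntegral.integral_const, intervalIntegral.integral_div, smul_eq_mul]

/-- For every c ∈ ℝ, x(t) = δ(t) + c − ln t/ln 2 solves
∫₀^{t/2} x − ∫_{t/2}^t x = 1 + t for t > 0: with the delta contributing
∫₀^{t/2} δ = 1 and ∫_{t/2}^t δ = 0, and the regular part g(t) = c − ln t/ln 2
satisfying ∫₀^{t/2} g − ∫_{t/2}^t g = t. -/
theorem example_two_solution (c : ℝ) :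
    ∀ t : ℝ, 0 < t →
      ((1 : ℝ) + ∫ s in (0:ℝ)..(t / 2), (c - Real.log s / Real.log 2)) -
        ((0 : ℝ) + ∫ s in (t / 2)..t, (c - Real.log s / Real.log 2)) = 1 + t := by
  intro t _
  have hlog : ((∫ s in (0 : ℝ)..t / 2, Real.log s) - ∫ s in t / 2..t, Real.log s) / Real.log 2
      = -t := by
    rw [integral_log_zero_half_sub_integral_log_half]
    field_simp [(Real.log_pos one_lt_two).ne']
  rw [integral_const_sub_log_div, integral_const_sub_log_div]
  linear_combination -hlog
end

section
/- Consider the difference equation K_n x(z) + Σ_{i=1}^{n−1} a_i (K_i − K_{i+1}) x(z + ln a_i) = f₀, where a_i ∈ (0,1), K_i ∈ ℝ, and f₀ ∈ ℝ, and let B(j) = K_n + Σ_{i=1}^{n−1} a_i^{1+j}(K_i − K_{i+1}). If B(0) = 0 and B'(0) ≠ 0, then for every constant c the linear function x(z) = (f₀ / B'(0)) z + c is a solution; here B'(0) = Σ_{i=1}^{n−1} a_i (ln a_i)(K_i − K_{i+1}). -/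
open Finset

theorem Finset.sum_mul_affine_shift {ι R : Type*} [CommRing R] (s : Finset ι) (w h : ι → R)
    (m c z : R) :
    ∑ i ∈ s, w i * (m * (z + h i) + c) =
      (∑ i ∈ s, w i) * (m * z + c) + m * ∑ i ∈ s, w i * h i := by
  rw [sum_mul, mul_sum, ← sum_add_distrib]
  exact sum_congr rfl fun i _ => by ring

/-- With `B(j) = w₀ + ∑ wᵢ e^{j hᵢ}`, the hypotheses say `B(0) = 0` and `B'(0) ≠ 0`: the constant
part of the shifted sum cancels and only the drift `m ∑ wᵢ hᵢ` survives. -/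
theorem affine_solves_shift_equation_of_simple_zero {ι K : Type*} [Field K] (s : Finset ι)
    (w₀ f c : K) (w h : ι → K) (hB : w₀ + ∑ i ∈ s, w i = 0)
    (hB' : ∑ i ∈ s, w i * h i ≠ 0) (z : K) :
    w₀ * (f / (∑ i ∈ s, w i * h i) * z + c) +
      ∑ i ∈ s, w i * (f / (∑ i ∈ s, w i * h i) * (z + h i) + c) = f := by
  rw [sum_mul_affine_shift, ← add_assoc, ← add_mul, hB, zero_mul, zero_add,
    div_mul_cancel₀ _ hB']

theorem difference_equation_simple_zero_general
    (n : ℕ) (a K : ℕ → ℝ) (f₀ c : ℝ)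
    (hB0 : K n + ∑ i ∈ Finset.Icc 1 (n - 1), a i * (K i - K (i + 1)) = 0)
    (hB'0 : (∑ i ∈ Finset.Icc 1 (n - 1),
        a i * Real.log (a i) * (K i - K (i + 1))) ≠ 0) :
    ∀ z : ℝ,
      K n * ((f₀ / ∑ i ∈ Finset.Icc 1 (n - 1),
          a i * Real.log (a i) * (K i - K (i + 1))) * z + c) +
      ∑ i ∈ Finset.Icc 1 (n - 1), a i * (K i - K (i + 1)) *
        ((f₀ / ∑ i ∈ Finset.Icc 1 (n - 1),
            a i * Real.log (a i) * (K i - K (i + 1))) * (z + Real.log (a i)) + c)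
      = f₀ := by
  have hB'_eq : ∑ i ∈ Icc 1 (n - 1), a i * Real.log (a i) * (K i - K (i + 1)) =
      ∑ i ∈ Icc 1 (n - 1), a i * (K i - K (i + 1)) * Real.log (a i) :=
    sum_congr rfl fun i _ => by ring
  rw [hB'_eq] at hB'0 ⊢
  exact affine_solves_shift_equation_of_simple_zero _ _ _ _ _ _ hB0 hB'0

/-- If B(0) = 0 and B'(0) ≠ 0, then for every c the linear function
x(z) = (f₀/B'(0)) z + c solves the difference equation
K_n x(z) + Σ a_i (K_i − K_{i+1}) x(z + ln a_i) = f₀, where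
B'(0) = Σ a_i (ln a_i)(K_i − K_{i+1}). -/
theorem difference_equation_simple_zero
    (n : ℕ) (hn : 2 ≤ n) (a K : ℕ → ℝ) (f₀ c : ℝ)
    (ha : ∀ i, 1 ≤ i → i ≤ n - 1 → 0 < a i ∧ a i < 1)
    (hB0 : K n + ∑ i ∈ Finset.Icc 1 (n - 1), a i * (K i - K (i + 1)) = 0)
    (hB'0 : (∑ i ∈ Finset.Icc 1 (n - 1),
        a i * Real.log (a i) * (K i - K (i + 1))) ≠ 0) :
    ∀ z : ℝ,
      K n * ((f₀ / ∑ i ∈ Finset.Icc 1 (n - 1),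
          a i * Real.log (a i) * (K i - K (i + 1))) * z + c) +
      ∑ i ∈ Finset.Icc 1 (n - 1), a i * (K i - K (i + 1)) *
        ((f₀ / ∑ i ∈ Finset.Icc 1 (n - 1),
            a i * Real.log (a i) * (K i - K (i + 1))) * (z + Real.log (a i)) + c)
      = f₀ :=
  difference_equation_simple_zero_general n a K f₀ c hB0 hB'0
end

section
/- With notation as before, let B(j) = K_n + Σ_{i=1}^{n−1} a_i^{1+j}(K_i − K_{i+1}) and suppose B(0) = B'(0) = ⋯ = B^{(k)}(0) = 0, B^{(k+1)}(0) ≠ 0 for some k ≥ 0. Then x(z) = (f₀ / B^{(k+1)}(0)) z^{k+1} is a solution of the difference equation K_n x(z) + Σ_{i=1}^{n−1} a_i (K_i − K_{i+1}) x(z + ln a_i) = f₀, and moreover any polynomial of degree ≤ k may be added to x without changing the left-hand side. -/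
/-!
Taylor-expanding at `z`, a weighted sum of shifts of a polynomial is
`∑ c_i p(z + h_i) = ∑_m μ_m (D^(m) p)(z)`, where `μ_m = ∑ c_i h_i^m` are the moments of the shifts
and `D^(m)` is the `m`-th Hasse derivative. For `c_i = a_i (K_i - K_{i+1})` and `h_i = ln a_i`
the moment `μ_m` is `B^(m)(0)`, so if these vanish for `1 ≤ m ≤ k`, then on polynomials of degree
`≤ k + 1` only `m = 0` and `m = k + 1` survive; `B(0) = 0` cancels the `m = 0` term against
`K_n p(z)`, and what remains is `B^(k+1)(0)` times the coefficient of `z^(k+1)`.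
-/

open Polynomial

namespace Polynomial

variable {R ι : Type*} [CommSemiring R]

theorem sum_mul_eval_add_eq_sum_moment_mul_hasseDeriv (s : Finset ι) (c h : ι → R)
    {p : R[X]} {N : ℕ} (hp : p.natDegree < N) (z : R) :
    ∑ i ∈ s, c i * p.eval (z + h i) =
      ∑ m ∈ Finset.range N, (∑ i ∈ s, c i * h i ^ m) * (hasseDeriv m p).eval z := by
  have hN : (taylor z p).natDegree < N := (natDegree_taylor p z).symm ▸ hp
  simp_rw [add_comm z, ← taylor_eval, eval_eq_sum_range' hN, taylor_coeff, Finset.mul_sum,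
    Finset.sum_mul]
  rw [Finset.sum_comm]
  exact Finset.sum_congr rfl fun m _ => Finset.sum_congr rfl fun i _ => by ring

theorem eval_hasseDeriv_of_natDegree_le {p : R[X]} {n : ℕ} (hp : p.natDegree ≤ n) (z : R) :
    (hasseDeriv n p).eval z = p.coeff n := by
  have hle : (hasseDeriv n p).natDegree ≤ 0 := (natDegree_hasseDeriv_le p n).trans (by omega)
  rw [eq_C_of_natDegree_le_zero hle, eval_C, hasseDeriv_coeff, zero_add, Nat.choose_self,
    Nat.cast_one, one_mul]

theorem sum_mul_eval_add_of_moment_eq_zero (s : Finset ι) (c h : ι → R) {k : ℕ}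
    (hμ : ∀ m, 1 ≤ m → m ≤ k → ∑ i ∈ s, c i * h i ^ m = 0)
    {p : R[X]} (hp : p.natDegree ≤ k + 1) (z : R) :
    ∑ i ∈ s, c i * p.eval (z + h i) =
      (∑ i ∈ s, c i) * p.eval z + (∑ i ∈ s, c i * h i ^ (k + 1)) * p.coeff (k + 1) := by
  have hmid : ∀ m ∈ Finset.range k,
      (∑ i ∈ s, c i * h i ^ (m + 1)) * (hasseDeriv (m + 1) p).eval z = 0 := fun m hm => by
    rw [hμ (m + 1) le_add_self (Finset.mem_range.mp hm), zero_mul]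
  rw [sum_mul_eval_add_eq_sum_moment_mul_hasseDeriv s c h (Nat.lt_succ_of_le hp),
    Finset.sum_range_succ, Finset.sum_range_succ', Finset.sum_eq_zero hmid,
    eval_hasseDeriv_of_natDegree_le hp]
  simp

end Polynomial

theorem difference_equation_multiple_zero_general
    (n : ℕ) (a K : ℕ → ℝ) (f₀ : ℝ) (k : ℕ)
    (hB0 : K n + ∑ i ∈ Finset.Icc 1 (n - 1), a i * (K i - K (i + 1)) = 0)
    (hBm : ∀ m : ℕ, 1 ≤ m → m ≤ k →
      (∑ i ∈ Finset.Icc 1 (n - 1),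
        a i * Real.log (a i) ^ m * (K i - K (i + 1))) = 0)
    (hBk1 : (∑ i ∈ Finset.Icc 1 (n - 1),
        a i * Real.log (a i) ^ (k + 1) * (K i - K (i + 1))) ≠ 0) :
    (∀ z : ℝ,
      K n * ((f₀ / ∑ i ∈ Finset.Icc 1 (n - 1),
          a i * Real.log (a i) ^ (k + 1) * (K i - K (i + 1))) * z ^ (k + 1)) +
      ∑ i ∈ Finset.Icc 1 (n - 1), a i * (K i - K (i + 1)) *
        ((f₀ / ∑ i ∈ Finset.Icc 1 (n - 1),
            a i * Real.log (a i) ^ (k + 1) * (K i - K (i + 1)))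
          * (z + Real.log (a i)) ^ (k + 1))
      = f₀) ∧
    (∀ p : Polynomial ℝ, p.degree ≤ (k : ℕ) → ∀ z : ℝ,
      K n * p.eval z +
      ∑ i ∈ Finset.Icc 1 (n - 1), a i * (K i - K (i + 1)) *
        p.eval (z + Real.log (a i)) = 0) := by
  set s := Finset.Icc 1 (n - 1)
  set B := fun m => ∑ i ∈ s, a i * Real.log (a i) ^ m * (K i - K (i + 1))
  have hmoment : ∀ m, ∑ i ∈ s, a i * (K i - K (i + 1)) * Real.log (a i) ^ m = B m :=
    fun m => Finset.sum_congr rfl fun i _ => by ring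
  have hLHS : ∀ p : ℝ[X], p.natDegree ≤ k + 1 → ∀ z,
      K n * p.eval z + ∑ i ∈ s, a i * (K i - K (i + 1)) * p.eval (z + Real.log (a i)) =
        B (k + 1) * p.coeff (k + 1) := by
    intro p hp z
    rw [sum_mul_eval_add_of_moment_eq_zero s _ _ (fun m h1 h2 => (hmoment m).trans (hBm m h1 h2))
      hp, hmoment, ← add_assoc, ← add_mul, hB0, zero_mul, zero_add]
  refine ⟨fun z => ?_, fun p hp z => ?_⟩
  · have hmonomial := hLHS (C (f₀ / B (k + 1)) * X ^ (k + 1)) (natDegree_C_mul_X_pow_le _ _) z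
    simp only [eval_mul, eval_C, eval_pow, eval_X, coeff_C_mul_X_pow, if_true] at hmonomial
    rw [hmonomial, mul_div_cancel₀ f₀ hBk1]
  · rw [hLHS p ((natDegree_le_of_degree_le hp).trans k.le_succ),
      coeff_eq_zero_of_degree_lt (hp.trans_lt (WithBot.coe_lt_coe.mpr k.lt_succ_self)), mul_zero]

/-- If B(0) = B'(0) = ⋯ = B^{(k)}(0) = 0 and B^{(k+1)}(0) ≠ 0, then
x(z) = (f₀/B^{(k+1)}(0)) z^{k+1} solves the difference equation
K_n x(z) + Σ a_i (K_i − K_{i+1}) x(z + ln a_i) = f₀, and the left-hand side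
vanishes on every polynomial of degree ≤ k. -/
theorem difference_equation_multiple_zero
    (n : ℕ) (hn : 2 ≤ n) (a K : ℕ → ℝ) (f₀ : ℝ) (k : ℕ)
    (ha : ∀ i, 1 ≤ i → i ≤ n - 1 → 0 < a i ∧ a i < 1)
    (hB0 : K n + ∑ i ∈ Finset.Icc 1 (n - 1), a i * (K i - K (i + 1)) = 0)
    (hBm : ∀ m : ℕ, 1 ≤ m → m ≤ k →
      (∑ i ∈ Finset.Icc 1 (n - 1),
        a i * Real.log (a i) ^ m * (K i - K (i + 1))) = 0)
    (hBk1 : (∑ i ∈ Finset.Icc 1 (n - 1),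
        a i * Real.log (a i) ^ (k + 1) * (K i - K (i + 1))) ≠ 0) :
    (∀ z : ℝ,
      K n * ((f₀ / ∑ i ∈ Finset.Icc 1 (n - 1),
          a i * Real.log (a i) ^ (k + 1) * (K i - K (i + 1))) * z ^ (k + 1)) +
      ∑ i ∈ Finset.Icc 1 (n - 1), a i * (K i - K (i + 1)) *
        ((f₀ / ∑ i ∈ Finset.Icc 1 (n - 1),
            a i * Real.log (a i) ^ (k + 1) * (K i - K (i + 1)))
          * (z + Real.log (a i)) ^ (k + 1))
      = f₀) ∧
    (∀ p : Polynomial ℝ, p.degree ≤ (k : ℕ) → ∀ z : ℝ,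
      K n * p.eval z +
      ∑ i ∈ Finset.Icc 1 (n - 1), a i * (K i - K (i + 1)) *
        p.eval (z + Real.log (a i)) = 0) :=
  difference_equation_multiple_zero_general n a K f₀ k hB0 hBm hBk1
end
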